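/- The density h₂ = (5/6)u₁² − (5/2)v₁² + (4/3)u³ + (2/3)v³ − 2uv² is a conserved density for the Mikhailov–Novikov–Wang system: the variational derivative (with respect to both u and v) of D_t(h₂) vanishes, i.e., δ(D_t h₂)/δu = 0 and δ(D_t h₂)/δv = 0, where D_t is the evolutionary derivation associated with the system. -/
import Mathlib


open MvPolynomial

/-- The differential polynomial ring ℚ[u, v, u₁, v₁, u₂, v₂, ...]:
variable `(0, i)` is `uᵢ`, `(1, i)` is `vᵢ`. -/
abbrev DP : Type := MvPolynomial (Fin 2 × ℕ) ℚ

noncomputable def U (i : ℕ) : DP := X (0, i)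
noncomputable def V (i : ℕ) : DP := X (1, i)

/-- The total derivative Dₓ, the unique derivation with Dₓ(uᵢ)=uᵢ₊₁, Dₓ(vᵢ)=vᵢ₊₁. -/
noncomputable def Dx : Derivation ℚ DP DP :=
  mkDerivation ℚ (fun p => X (p.1, p.2 + 1))

noncomputable def DxL : DP →ₗ[ℚ] DP := Dx.toLinearMap

/-- Largest derivative order occurring in a differential polynomial. -/
noncomputable def maxIdx (h : DP) : ℕ := h.vars.sup (fun p => p.2)

/-- Variational derivative δh/δu = Σₖ (−Dₓ)ᵏ(∂h/∂uₖ). -/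
noncomputable def varU (h : DP) : DP :=
  ∑ k ∈ Finset.range (maxIdx h + 1), ((-DxL) ^ k) (pderiv (0, k) h)

/-- Variational derivative δh/δv. -/
noncomputable def varV (h : DP) : DP :=
  ∑ k ∈ Finset.range (maxIdx h + 1), ((-DxL) ^ k) (pderiv (1, k) h)

/-- The evolutionary derivation D_Q with D_Q(uᵢ)=Dₓⁱ(Q¹), D_Q(vᵢ)=Dₓⁱ(Q²). -/
noncomputable def evDer (Q1 Q2 : DP) : Derivation ℚ DP DP :=
  mkDerivation ℚ (fun p => (DxL ^ p.2) (if p.1 = 0 then Q1 else Q2))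

/-- Right-hand side F₁ of the Mikhailov–Novikov–Wang system. -/
noncomputable def F1 : DP :=
  -(5/3 : ℚ) • U 5 - 10 * V 0 * V 3 - 15 * V 1 * V 2 + 10 * U 0 * U 3
    + 25 * U 1 * U 2 - 6 * V 0 ^ 2 * V 1 + 6 * V 0 ^ 2 * U 1
    + 12 * U 0 * V 0 * V 1 - 12 * U 0 ^ 2 * U 1

/-- Right-hand side F₂ of the Mikhailov–Novikov–Wang system. -/
noncomputable def F2 : DP :=
  15 * V 5 + 30 * V 1 * V 2 - 30 * U 0 * V 3 - 45 * U 1 * V 2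
    - 35 * U 2 * V 1 - 10 * V 0 * U 3 - 6 * V 0 ^ 2 * V 1 + 6 * V 0 ^ 2 * U 1
    + 12 * U 0 ^ 2 * V 1 + 12 * U 0 * V 0 * U 1

/-- Action of the Hamiltonian operator P on a column (g₁,g₂): first component. -/
noncomputable def Pact1 (g1 g2 : DP) : DP :=
  ((DxL ^ 3) g1 - (6/5 : ℚ) • (U 0 * DxL g1) - (3/5 : ℚ) • (U 1 * g1))
    + (-(6/5 : ℚ) • (V 0 * DxL g2) - (3/5 : ℚ) • (V 1 * g2))

/-- Action of the Hamiltonian operator P on a column (g₁,g₂): second component. -/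
noncomputable def Pact2 (g1 g2 : DP) : DP :=
  (-(6/5 : ℚ) • (V 0 * DxL g1) - (3/5 : ℚ) • (V 1 * g1))
    + (3 • (DxL ^ 3) g2 - (((18/5 : ℚ) • U 0 + (12/5 : ℚ) • V 0) * DxL g2)
        - (9/5 : ℚ) • (U 1 * g2) - (6/5 : ℚ) • (V 1 * g2))


set_option maxHeartbeats 4000000
set_option linter.unreachableTactic false
set_option linter.unusedTactic false
set_option linter.unnecessarySeqFocus false

-- ===== auxiliary lemmas =====
lemma Dx_U (i : ℕ) : Dx (U i) = U (i+1) := by simp [Dx, U, mkDerivation_X]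
lemma Dx_V (i : ℕ) : Dx (V i) = V (i+1) := by simp [Dx, V, mkDerivation_X]
lemma DxL_apply (p : DP) : DxL p = Dx p := rfl
lemma Dx_C (q : ℚ) : Dx (C q : DP) = 0 := by
  have : (C q : DP) = algebraMap ℚ DP q := rfl
  rw [this, Derivation.map_algebraMap]
lemma Dx_ofNat (n : ℕ) [n.AtLeastTwo] : Dx (no_index (OfNat.ofNat n) : DP) = 0 := by
  rw [show (OfNat.ofNat n : DP) = C (OfNat.ofNat n) from (map_ofNat C n).symm, Dx_C]
lemma qn (n : ℕ) [n.AtLeastTwo] (p : DP) :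
    (no_index (OfNat.ofNat n) : ℚ) • p = (OfNat.ofNat n : DP) * p := by
  rw [smul_eq_C_mul, map_ofNat]
lemma evD_U (i : ℕ) : evDer F1 F2 (U i) = (DxL ^ i) F1 := by simp [evDer, U, mkDerivation_X]
lemma evD_V (i : ℕ) : evDer F1 F2 (V i) = (DxL ^ i) F2 := by simp [evDer, V, mkDerivation_X]
lemma ev_ofNat (n : ℕ) [n.AtLeastTwo] : evDer F1 F2 (no_index (OfNat.ofNat n) : DP) = 0 := by
  have h : (OfNat.ofNat n : DP) = algebraMap ℚ DP (OfNat.ofNat n) := by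
    rw [show (OfNat.ofNat n : DP) = C (OfNat.ofNat n) from (map_ofNat C n).symm]; rfl
  rw [h, Derivation.map_algebraMap]
lemma pdU (j i : ℕ) : pderiv ((0:Fin 2), j) (U i) = if j = i then 1 else 0 := by
  split
  · subst ‹j = i›; exact pderiv_X_self _
  · exact pderiv_X_of_ne (by simp [Prod.ext_iff]; omega)
lemma pdV (j i : ℕ) : pderiv ((1:Fin 2), j) (V i) = if j = i then 1 else 0 := by
  split
  · subst ‹j = i›; exact pderiv_X_self _
  · exact pderiv_X_of_ne (by simp [Prod.ext_iff]; omega)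
lemma pdUV (j i : ℕ) : pderiv ((0:Fin 2), j) (V i) = 0 :=
  pderiv_X_of_ne (by simp [Prod.ext_iff])
lemma pdVU (j i : ℕ) : pderiv ((1:Fin 2), j) (U i) = 0 :=
  pderiv_X_of_ne (by simp [Prod.ext_iff])
lemma pd_ofNat (s : Fin 2) (j : ℕ) (n : ℕ) [n.AtLeastTwo] :
    pderiv (s, j) (no_index (OfNat.ofNat n) : DP) = 0 := by
  rw [show (OfNat.ofNat n : DP) = C (OfNat.ofNat n) from (map_ofNat C n).symm, pderiv_C]
lemma pderiv_maxIdx (h : DP) (s : Fin 2) (k : ℕ) (hk : maxIdx h < k) : pderiv (s, k) h = 0 := by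
  apply pderiv_eq_zero_of_notMem_vars
  intro hmem
  have h2 : k ≤ maxIdx h := Finset.le_sup (f := fun p : Fin 2 × ℕ => p.2) hmem
  omega
lemma varU_eq (h : DP) (N : ℕ) (hp : ∀ k, N ≤ k → pderiv ((0:Fin 2), k) h = 0) :
    varU h = ∑ k ∈ Finset.range N, ((-DxL) ^ k) (pderiv (0, k) h) := by
  rw [varU]
  trans (∑ k ∈ Finset.range (max (maxIdx h + 1) N), ((-DxL) ^ k) (pderiv (0, k) h))
  · apply Finset.sum_subset (Finset.range_subset_range.2 (le_max_left _ _))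
    intro k _ hk
    rw [pderiv_maxIdx h 0 k (by simp at hk; omega), map_zero]
  · symm
    apply Finset.sum_subset (Finset.range_subset_range.2 (le_max_right _ _))
    intro k _ hk
    rw [hp k (by simp at hk; omega), map_zero]
lemma varV_eq (h : DP) (N : ℕ) (hp : ∀ k, N ≤ k → pderiv ((1:Fin 2), k) h = 0) :
    varV h = ∑ k ∈ Finset.range N, ((-DxL) ^ k) (pderiv (1, k) h) := by
  rw [varV]
  trans (∑ k ∈ Finset.range (max (maxIdx h + 1) N), ((-DxL) ^ k) (pderiv (1, k) h))
  · apply Finset.sum_subset (Finset.range_subset_range.2 (le_max_left _ _))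
    intro k _ hk
    rw [pderiv_maxIdx h 1 k (by simp at hk; omega), map_zero]
  · symm
    apply Finset.sum_subset (Finset.range_subset_range.2 (le_max_right _ _))
    intro k _ hk
    rw [hp k (by simp at hk; omega), map_zero]
lemma bridge0 (p : DP) : ((-DxL)^0) p = p := rfl
lemma bridge1 (p : DP) : ((-DxL)^1) p = -(Dx p) := by
  rw [pow_one, LinearMap.neg_apply, DxL_apply]
lemma bridge2 (p : DP) : ((-DxL)^2) p = Dx (Dx p) := by
  rw [pow_succ, Module.End.mul_apply, LinearMap.neg_apply, map_neg, bridge1, DxL_apply, neg_neg]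
lemma bridge3 (p : DP) : ((-DxL)^3) p = -(Dx (Dx (Dx p))) := by
  rw [pow_succ, Module.End.mul_apply, LinearMap.neg_apply, map_neg, bridge2, DxL_apply]
lemma bridge4 (p : DP) : ((-DxL)^4) p = Dx (Dx (Dx (Dx p))) := by
  rw [pow_succ, Module.End.mul_apply, LinearMap.neg_apply, map_neg, bridge3, DxL_apply, neg_neg]
lemma bridge5 (p : DP) : ((-DxL)^5) p = -(Dx (Dx (Dx (Dx (Dx p))))) := by
  rw [pow_succ, Module.End.mul_apply, LinearMap.neg_apply, map_neg, bridge4, DxL_apply]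
lemma bridge6 (p : DP) : ((-DxL)^6) p = Dx (Dx (Dx (Dx (Dx (Dx p))))) := by
  rw [pow_succ, Module.End.mul_apply, LinearMap.neg_apply, map_neg, bridge5, DxL_apply, neg_neg]

noncomputable def F1i : DP := ((-36) * U 0 * U 0 * U 1 + 30 * U 0 * U 3 + 36 * U 0 * V 0 * V 1 + 75 * U 1 * U 2 + 18 * U 1 * V 0 * V 0 + (-5) * U 5 + (-18) * V 0 * V 0 * V 1 + (-30) * V 0 * V 3 + (-45) * V 1 * V 2)
noncomputable def F2i : DP := (36 * U 0 * U 0 * V 1 + 36 * U 0 * U 1 * V 0 + (-90) * U 0 * V 3 + 18 * U 1 * V 0 * V 0 + (-135) * U 1 * V 2 + (-105) * U 2 * V 1 + (-30) * U 3 * V 0 + (-18) * V 0 * V 0 * V 1 + 90 * V 1 * V 2 + 45 * V 5)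
noncomputable def G54 : DP := ((-2592) * U 0 * U 0 * U 0 * U 0 * U 1 + 2160 * U 0 * U 0 * U 0 * U 3 + 4320 * U 0 * U 0 * U 1 * U 2 + (-360) * U 0 * U 0 * U 5 + 4320 * U 0 * U 0 * V 0 * V 3 + (-6480) * U 0 * U 0 * V 1 * V 2 + (-2160) * U 0 * U 1 * U 1 * U 1 + 900 * U 0 * U 1 * U 4 + 10800 * U 0 * U 1 * V 0 * V 2 + (-8640) * U 0 * U 1 * V 1 * V 1 + 4320 * U 0 * U 2 * V 0 * V 1 + 1080 * U 0 * U 3 * V 0 * V 0 + (-3240) * U 0 * V 0 * V 0 * V 3 + (-6480) * U 0 * V 0 * V 1 * V 2 + (-3240) * U 0 * V 0 * V 5 + 8100 * U 0 * V 1 * V 4 + 3150 * U 1 * U 1 * U 3 + (-1080) * U 1 * U 1 * V 0 * V 1 + 2250 * U 1 * U 2 * U 2 + (-2160) * U 1 * U 2 * V 0 * V 0 + (-150) * U 1 * U 6 + (-5400) * U 1 * V 0 * V 0 * V 2 + (-4320) * U 1 * V 0 * V 1 * V 1 + (-900) * U 1 * V 0 * V 4 + 18000 * U 1 * V 1 *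 V 3 + (-1350) * U 1 * V 2 * V 2 + (-5400) * U 2 * V 0 * V 0 * V 1 + 21600 * U 2 * V 1 * V 2 + (-1080) * U 3 * V 0 * V 0 * V 0 + 12150 * U 3 * V 1 * V 1 + 2700 * U 4 * V 0 * V 1 + 180 * U 5 * V 0 * V 0 + 1080 * V 0 * V 0 * V 0 * V 3 + 6480 * V 0 * V 0 * V 1 * V 2 + 1620 * V 0 * V 0 * V 5 + 3240 * V 0 * V 1 * V 1 * V 1 + (-8100) * V 1 * V 1 * V 3 + (-8100) * V 1 * V 2 * V 2 + (-4050) * V 1 * V 6)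

lemma F1s : (3:ℚ) • F1 = F1i := by
  rw [F1, F1i]
  simp only [smul_sub, smul_add, smul_neg, smul_smul, neg_smul]
  norm_num
  simp only [qn]
  ring
lemma F2s : (3:ℚ) • F2 = F2i := by
  rw [F2, F2i, qn]
  ring

lemma DxF1i : Dx F1i = ((-36) * U 0 * U 0 * U 2 + (-72) * U 0 * U 1 * U 1 + 30 * U 0 * U 4 + 36 * U 0 * V 0 * V 2 + 36 * U 0 * V 1 * V 1 + 105 * U 1 * U 3 + 72 * U 1 * V 0 * V 1 + 75 * U 2 * U 2 + 18 * U 2 * V 0 * V 0 + (-5) * U 6 + (-18) * V 0 * V 0 * V 2 + (-36) * V 0 * V 1 * V 1 + (-30) * V 0 * V 4 + (-75) * V 1 * V 3 + (-45) * V 2 * V 2) := by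
  rw [F1i]
  simp only [map_add, map_neg, neg_zero, Derivation.leibniz, Dx_U, Dx_V, Dx_ofNat, Derivation.map_one_eq_zero, smul_eq_mul, mul_zero, zero_mul, add_zero, zero_add, mul_one, one_mul]
  ring
lemma DxF2i : Dx F2i = (36 * U 0 * U 0 * V 2 + 108 * U 0 * U 1 * V 1 + 36 * U 0 * U 2 * V 0 + (-90) * U 0 * V 4 + 36 * U 1 * U 1 * V 0 + 36 * U 1 * V 0 * V 1 + (-225) * U 1 * V 3 + 18 * U 2 * V 0 * V 0 + (-240) * U 2 * V 2 + (-135) * U 3 * V 1 + (-30) * U 4 * V 0 + (-18) * V 0 * V 0 * V 2 + (-36) * V 0 * V 1 * V 1 + 90 * V 1 * V 3 + 90 * V 2 * V 2 + 45 * V 6) := by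
  rw [F2i]
  simp only [map_add, map_neg, neg_zero, Derivation.leibniz, Dx_U, Dx_V, Dx_ofNat, Derivation.map_one_eq_zero, smul_eq_mul, mul_zero, zero_mul, add_zero, zero_add, mul_one, one_mul]
  ring

lemma sm3U0 : (3:ℚ) • evDer F1 F2 (U 0) = F1i := by
  rw [evD_U, pow_zero, Module.End.one_apply, F1s]
lemma sm3V0 : (3:ℚ) • evDer F1 F2 (V 0) = F2i := by
  rw [evD_V, pow_zero, Module.End.one_apply, F2s]

lemma sm3U1 : (3:ℚ) • evDer F1 F2 (U 1) = ((-36) * U 0 * U 0 * U 2 + (-72) * U 0 * U 1 * U 1 + 30 * U 0 * U 4 + 36 * U 0 * V 0 * V 2 + 36 * U 0 * V 1 * V 1 + 105 * U 1 * U 3 + 72 * U 1 * V 0 * V 1 + 75 * U 2 * U 2 + 18 * U 2 * V 0 * V 0 + (-5) * U 6 + (-18) * V 0 * V 0 * V 2 + (-36) * V 0 * V 1 * V 1 + (-30) * V 0 * V 4 + (-75) * V 1 * V 3 + (-45) * V 2 * V 2) := by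
  rw [evD_U, pow_one, ← map_smul, F1s, DxL_apply, DxF1i]
lemma sm3V1 : (3:ℚ) • evDer F1 F2 (V 1) = (36 * U 0 * U 0 * V 2 + 108 * U 0 * U 1 * V 1 + 36 * U 0 * U 2 * V 0 + (-90) * U 0 * V 4 + 36 * U 1 * U 1 * V 0 + 36 * U 1 * V 0 * V 1 + (-225) * U 1 * V 3 + 18 * U 2 * V 0 * V 0 + (-240) * U 2 * V 2 + (-135) * U 3 * V 1 + (-30) * U 4 * V 0 + (-18) * V 0 * V 0 * V 2 + (-36) * V 0 * V 1 * V 1 + 90 * V 1 * V 3 + 90 * V 2 * V 2 + 45 * V 6) := by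
  rw [evD_V, pow_one, ← map_smul, F2s, DxL_apply, DxF2i]

lemma h18s : (18:ℚ) • ((5/6 : ℚ) • (U 1 ^ 2) - (5/2 : ℚ) • (V 1 ^ 2) + (4/3 : ℚ) • (U 0 ^ 3) + (2/3 : ℚ) • (V 0 ^ 3) - 2 * U 0 * V 0 ^ 2) = (24 * U 0 * U 0 * U 0 + (-36) * U 0 * V 0 * V 0 + 15 * U 1 * U 1 + 12 * V 0 * V 0 * V 0 + (-45) * V 1 * V 1) := by
  simp only [smul_sub, smul_add, smul_neg, smul_smul, neg_smul]
  norm_num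
  simp only [qn]
  ring

lemma core : (3:ℚ) • evDer F1 F2 (24 * U 0 * U 0 * U 0 + (-36) * U 0 * V 0 * V 0 + 15 * U 1 * U 1 + 12 * V 0 * V 0 * V 0 + (-45) * V 1 * V 1) = G54 := by
  simp only [map_add, map_neg, neg_zero, Derivation.leibniz, ev_ofNat, smul_eq_mul,
    mul_zero, zero_mul, add_zero, zero_add, smul_add, smul_sub, smul_neg,
    ← mul_smul_comm, sm3U0, sm3U1, sm3V0, sm3V1, G54]
  simp only [F1i, F2i]
  ring

lemma Dh2 : evDer F1 F2 ((5/6 : ℚ) • (U 1 ^ 2) - (5/2 : ℚ) • (V 1 ^ 2) + (4/3 : ℚ) • (U 0 ^ 3) + (2/3 : ℚ) • (V 0 ^ 3) - 2 * U 0 * V 0 ^ 2) = (1/54 : ℚ) • G54 := by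
  have h1 : (54:ℚ) • evDer F1 F2 ((5/6 : ℚ) • (U 1 ^ 2) - (5/2 : ℚ) • (V 1 ^ 2) + (4/3 : ℚ) • (U 0 ^ 3) + (2/3 : ℚ) • (V 0 ^ 3) - 2 * U 0 * V 0 ^ 2) = G54 := by
    have h2 : (54:ℚ) • evDer F1 F2 ((5/6 : ℚ) • (U 1 ^ 2) - (5/2 : ℚ) • (V 1 ^ 2) + (4/3 : ℚ) • (U 0 ^ 3) + (2/3 : ℚ) • (V 0 ^ 3) - 2 * U 0 * V 0 ^ 2)
        = (3:ℚ) • evDer F1 F2 ((18:ℚ) • ((5/6 : ℚ) • (U 1 ^ 2) - (5/2 : ℚ) • (V 1 ^ 2) + (4/3 : ℚ) • (U 0 ^ 3) + (2/3 : ℚ) • (V 0 ^ 3) - 2 * U 0 * V 0 ^ 2)) := by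
      rw [Derivation.map_smul, smul_smul]; norm_num
    rw [h2, h18s, core]
  rw [← h1, smul_smul]
  norm_num

lemma pHighU : ∀ k, 7 ≤ k → pderiv ((0:Fin 2), k) G54 = 0 := by
  intro k hk
  have hU : ∀ i, i < 7 → pderiv ((0:Fin 2), k) (U i) = 0 := by
    intro i hi; rw [pdU, if_neg (by omega)]
  simp [G54, pderiv_mul, pd_ofNat, pdUV, hU, -Prod.mk_zero_zero, -Prod.mk_one_one]
lemma pHighV : ∀ k, 7 ≤ k → pderiv ((1:Fin 2), k) G54 = 0 := by
  intro k hk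
  have hV : ∀ i, i < 7 → pderiv ((1:Fin 2), k) (V i) = 0 := by
    intro i hi; rw [pdV, if_neg (by omega)]
  simp [G54, pderiv_mul, pd_ofNat, pdVU, hV, -Prod.mk_zero_zero, -Prod.mk_one_one]

lemma pU0 : pderiv ((0:Fin 2), 0) G54 = ((-10368) * U 0 * U 0 * U 0 * U 1 + 6480 * U 0 * U 0 * U 3 + 8640 * U 0 * U 1 * U 2 + (-720) * U 0 * U 5 + 8640 * U 0 * V 0 * V 3 + (-12960) * U 0 * V 1 * V 2 + (-2160) * U 1 * U 1 * U 1 + 900 * U 1 * U 4 + 10800 * U 1 * V 0 * V 2 + (-8640) * U 1 * V 1 * V 1 + 4320 * U 2 * V 0 * V 1 + 1080 * U 3 * V 0 * V 0 + (-3240) * V 0 * V 0 * V 3 + (-6480) * V 0 * V 1 * V 2 + (-3240) * V 0 * V 5 + 8100 * V 1 * V 4) := by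
  simp [G54, pderiv_mul, pdU, pdUV, pd_ofNat, -Prod.mk_zero_zero, -Prod.mk_one_one] <;> ring
lemma TU0 : ((-DxL)^0) (pderiv ((0:Fin 2), 0) G54) = ((-10368) * U 0 * U 0 * U 0 * U 1 + 6480 * U 0 * U 0 * U 3 + 8640 * U 0 * U 1 * U 2 + (-720) * U 0 * U 5 + 8640 * U 0 * V 0 * V 3 + (-12960) * U 0 * V 1 * V 2 + (-2160) * U 1 * U 1 * U 1 + 900 * U 1 * U 4 + 10800 * U 1 * V 0 * V 2 + (-8640) * U 1 * V 1 * V 1 + 4320 * U 2 * V 0 * V 1 + 1080 * U 3 * V 0 * V 0 + (-3240) * V 0 * V 0 * V 3 + (-6480) * V 0 * V 1 * V 2 + (-3240) * V 0 * V 5 + 8100 * V 1 * V 4) := by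
  rw [pU0, bridge0]
lemma pU1 : pderiv ((0:Fin 2), 1) G54 = ((-2592) * U 0 * U 0 * U 0 * U 0 + 4320 * U 0 * U 0 * U 2 + (-6480) * U 0 * U 1 * U 1 + 900 * U 0 * U 4 + 10800 * U 0 * V 0 * V 2 + (-8640) * U 0 * V 1 * V 1 + 6300 * U 1 * U 3 + (-2160) * U 1 * V 0 * V 1 + 2250 * U 2 * U 2 + (-2160) * U 2 * V 0 * V 0 + (-150) * U 6 + (-5400) * V 0 * V 0 * V 2 + (-4320) * V 0 * V 1 * V 1 + (-900) * V 0 * V 4 + 18000 * V 1 * V 3 + (-1350) * V 2 * V 2) := by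
  simp [G54, pderiv_mul, pdU, pdUV, pd_ofNat, -Prod.mk_zero_zero, -Prod.mk_one_one] <;> ring
lemma stepU1_0 : Dx ((-2592) * U 0 * U 0 * U 0 * U 0 + 4320 * U 0 * U 0 * U 2 + (-6480) * U 0 * U 1 * U 1 + 900 * U 0 * U 4 + 10800 * U 0 * V 0 * V 2 + (-8640) * U 0 * V 1 * V 1 + 6300 * U 1 * U 3 + (-2160) * U 1 * V 0 * V 1 + 2250 * U 2 * U 2 + (-2160) * U 2 * V 0 * V 0 + (-150) * U 6 + (-5400) * V 0 * V 0 * V 2 + (-4320) * V 0 * V 1 * V 1 + (-900) * V 0 * V 4 + 18000 * V 1 * V 3 + (-1350) * V 2 * V 2) = ((-10368) * U 0 * U 0 * U 0 * U 1 + 4320 * U 0 * U 0 * U 3 + (-4320) * U 0 * U 1 * U 2 + 900 * U 0 * U 5 + 10800 * U 0 * V 0 * V 3 + (-6480) * U 0 * V 1 * V 2 + (-6480) * U 1 * U 1 * U 1 + 7200 * U 1 * U 4 + 8640 * U 1 * V 0 * V 2 + (-10800) * U 1 * V 1 * V 1 + 10800 * U 2 * U 3 + (-6480) * U 2 * V 0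 * V 1 + (-2160) * U 3 * V 0 * V 0 + (-150) * U 7 + (-5400) * V 0 * V 0 * V 3 + (-19440) * V 0 * V 1 * V 2 + (-900) * V 0 * V 5 + (-4320) * V 1 * V 1 * V 1 + 17100 * V 1 * V 4 + 15300 * V 2 * V 3) := by
  simp only [map_add, map_neg, neg_zero, Derivation.leibniz, Dx_U, Dx_V, Dx_ofNat, Derivation.map_one_eq_zero, smul_eq_mul, mul_zero, zero_mul, add_zero, zero_add, mul_one, one_mul] <;> ring
lemma TU1 : ((-DxL)^1) (pderiv ((0:Fin 2), 1) G54) = (-((-10368) * U 0 * U 0 * U 0 * U 1 + 4320 * U 0 * U 0 * U 3 + (-4320) * U 0 * U 1 * U 2 + 900 * U 0 * U 5 + 10800 * U 0 * V 0 * V 3 + (-6480) * U 0 * V 1 * V 2 + (-6480) * U 1 * U 1 * U 1 + 7200 * U 1 * U 4 + 8640 * U 1 * V 0 * V 2 + (-10800) * U 1 * V 1 * V 1 + 10800 * U 2 * U 3 + (-6480) * U 2 * V 0 * V 1 + (-2160) * U 3 * V 0 * V 0 + (-150) * U 7 + (-5400) * V 0 * V 0 * V 3 + (-19440) * V 0 *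 V 1 * V 2 + (-900) * V 0 * V 5 + (-4320) * V 1 * V 1 * V 1 + 17100 * V 1 * V 4 + 15300 * V 2 * V 3)) := by
  rw [pU1, bridge1, stepU1_0]
lemma pU2 : pderiv ((0:Fin 2), 2) G54 = (4320 * U 0 * U 0 * U 1 + 4320 * U 0 * V 0 * V 1 + 4500 * U 1 * U 2 + (-2160) * U 1 * V 0 * V 0 + (-5400) * V 0 * V 0 * V 1 + 21600 * V 1 * V 2) := by
  simp [G54, pderiv_mul, pdU, pdUV, pd_ofNat, -Prod.mk_zero_zero, -Prod.mk_one_one] <;> ring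
lemma stepU2_0 : Dx (4320 * U 0 * U 0 * U 1 + 4320 * U 0 * V 0 * V 1 + 4500 * U 1 * U 2 + (-2160) * U 1 * V 0 * V 0 + (-5400) * V 0 * V 0 * V 1 + 21600 * V 1 * V 2) = (4320 * U 0 * U 0 * U 2 + 8640 * U 0 * U 1 * U 1 + 4320 * U 0 * V 0 * V 2 + 4320 * U 0 * V 1 * V 1 + 4500 * U 1 * U 3 + 4500 * U 2 * U 2 + (-2160) * U 2 * V 0 * V 0 + (-5400) * V 0 * V 0 * V 2 + (-10800) * V 0 * V 1 * V 1 + 21600 * V 1 * V 3 + 21600 * V 2 * V 2) := by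
  simp only [map_add, map_neg, neg_zero, Derivation.leibniz, Dx_U, Dx_V, Dx_ofNat, Derivation.map_one_eq_zero, smul_eq_mul, mul_zero, zero_mul, add_zero, zero_add, mul_one, one_mul] <;> ring
lemma stepU2_1 : Dx (4320 * U 0 * U 0 * U 2 + 8640 * U 0 * U 1 * U 1 + 4320 * U 0 * V 0 * V 2 + 4320 * U 0 * V 1 * V 1 + 4500 * U 1 * U 3 + 4500 * U 2 * U 2 + (-2160) * U 2 * V 0 * V 0 + (-5400) * V 0 * V 0 * V 2 + (-10800) * V 0 * V 1 * V 1 + 21600 * V 1 * V 3 + 21600 * V 2 * V 2) = (4320 * U 0 * U 0 * U 3 + 25920 * U 0 * U 1 * U 2 + 4320 * U 0 * V 0 * V 3 + 12960 * U 0 * V 1 * V 2 + 8640 * U 1 * U 1 * U 1 + 4500 * U 1 * U 4 + 4320 * U 1 * V 0 * V 2 + 4320 * U 1 * V 1 * V 1 + 13500 * U 2 * U 3 + (-4320) * U 2 * V 0 * V 1 + (-2160) * U 3 * V 0 * V 0 + (-5400) * V 0 * V 0 * V 3 + (-32400) * V 0 * V 1 * V 2 + (-10800) * V 1 * V 1 *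 V 1 + 21600 * V 1 * V 4 + 64800 * V 2 * V 3) := by
  simp only [map_add, map_neg, neg_zero, Derivation.leibniz, Dx_U, Dx_V, Dx_ofNat, Derivation.map_one_eq_zero, smul_eq_mul, mul_zero, zero_mul, add_zero, zero_add, mul_one, one_mul] <;> ring
lemma TU2 : ((-DxL)^2) (pderiv ((0:Fin 2), 2) G54) = (4320 * U 0 * U 0 * U 3 + 25920 * U 0 * U 1 * U 2 + 4320 * U 0 * V 0 * V 3 + 12960 * U 0 * V 1 * V 2 + 8640 * U 1 * U 1 * U 1 + 4500 * U 1 * U 4 + 4320 * U 1 * V 0 * V 2 + 4320 * U 1 * V 1 * V 1 + 13500 * U 2 * U 3 + (-4320) * U 2 * V 0 * V 1 + (-2160) * U 3 * V 0 * V 0 + (-5400) * V 0 * V 0 * V 3 + (-32400) * V 0 * V 1 * V 2 + (-10800) * V 1 * V 1 * V 1 + 21600 * V 1 * V 4 + 64800 * V 2 * V 3) := by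
  rw [pU2, bridge2, stepU2_0, stepU2_1]
lemma pU3 : pderiv ((0:Fin 2), 3) G54 = (2160 * U 0 * U 0 * U 0 + 1080 * U 0 * V 0 * V 0 + 3150 * U 1 * U 1 + (-1080) * V 0 * V 0 * V 0 + 12150 * V 1 * V 1) := by
  simp [G54, pderiv_mul, pdU, pdUV, pd_ofNat, -Prod.mk_zero_zero, -Prod.mk_one_one] <;> ring
lemma stepU3_0 : Dx (2160 * U 0 * U 0 * U 0 + 1080 * U 0 * V 0 * V 0 + 3150 * U 1 * U 1 + (-1080) * V 0 * V 0 * V 0 + 12150 * V 1 * V 1) = (6480 * U 0 * U 0 * U 1 + 2160 * U 0 * V 0 * V 1 + 6300 * U 1 * U 2 + 1080 * U 1 * V 0 * V 0 + (-3240) * V 0 * V 0 * V 1 + 24300 * V 1 * V 2) := by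
  simp only [map_add, map_neg, neg_zero, Derivation.leibniz, Dx_U, Dx_V, Dx_ofNat, Derivation.map_one_eq_zero, smul_eq_mul, mul_zero, zero_mul, add_zero, zero_add, mul_one, one_mul] <;> ring
lemma stepU3_1 : Dx (6480 * U 0 * U 0 * U 1 + 2160 * U 0 * V 0 * V 1 + 6300 * U 1 * U 2 + 1080 * U 1 * V 0 * V 0 + (-3240) * V 0 * V 0 * V 1 + 24300 * V 1 * V 2) = (6480 * U 0 * U 0 * U 2 + 12960 * U 0 * U 1 * U 1 + 2160 * U 0 * V 0 * V 2 + 2160 * U 0 * V 1 * V 1 + 6300 * U 1 * U 3 + 4320 * U 1 * V 0 * V 1 + 6300 * U 2 * U 2 + 1080 * U 2 * V 0 * V 0 + (-3240) * V 0 * V 0 * V 2 + (-6480) * V 0 * V 1 * V 1 + 24300 * V 1 * V 3 + 24300 * V 2 * V 2) := by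
  simp only [map_add, map_neg, neg_zero, Derivation.leibniz, Dx_U, Dx_V, Dx_ofNat, Derivation.map_one_eq_zero, smul_eq_mul, mul_zero, zero_mul, add_zero, zero_add, mul_one, one_mul] <;> ring
lemma stepU3_2 : Dx (6480 * U 0 * U 0 * U 2 + 12960 * U 0 * U 1 * U 1 + 2160 * U 0 * V 0 * V 2 + 2160 * U 0 * V 1 * V 1 + 6300 * U 1 * U 3 + 4320 * U 1 * V 0 * V 1 + 6300 * U 2 * U 2 + 1080 * U 2 * V 0 * V 0 + (-3240) * V 0 * V 0 * V 2 + (-6480) * V 0 * V 1 * V 1 + 24300 * V 1 * V 3 + 24300 * V 2 * V 2) = (6480 * U 0 * U 0 * U 3 + 38880 * U 0 * U 1 * U 2 + 2160 * U 0 * V 0 * V 3 + 6480 * U 0 * V 1 * V 2 + 12960 * U 1 * U 1 * U 1 + 6300 * U 1 * U 4 + 6480 * U 1 * V 0 * V 2 + 6480 * U 1 * V 1 * V 1 + 18900 * U 2 * U 3 + 6480 * U 2 * V 0 * V 1 + 1080 * U 3 * V 0 * V 0 + (-3240) * V 0 * V 0 * V 3 + (-19440) * V 0 * V 1 * V 2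 + (-6480) * V 1 * V 1 * V 1 + 24300 * V 1 * V 4 + 72900 * V 2 * V 3) := by
  simp only [map_add, map_neg, neg_zero, Derivation.leibniz, Dx_U, Dx_V, Dx_ofNat, Derivation.map_one_eq_zero, smul_eq_mul, mul_zero, zero_mul, add_zero, zero_add, mul_one, one_mul] <;> ring
lemma TU3 : ((-DxL)^3) (pderiv ((0:Fin 2), 3) G54) = (-(6480 * U 0 * U 0 * U 3 + 38880 * U 0 * U 1 * U 2 + 2160 * U 0 * V 0 * V 3 + 6480 * U 0 * V 1 * V 2 + 12960 * U 1 * U 1 * U 1 + 6300 * U 1 * U 4 + 6480 * U 1 * V 0 * V 2 + 6480 * U 1 * V 1 * V 1 + 18900 * U 2 * U 3 + 6480 * U 2 * V 0 * V 1 + 1080 * U 3 * V 0 * V 0 + (-3240) * V 0 * V 0 * V 3 + (-19440) * V 0 * V 1 * V 2 + (-6480) * V 1 * V 1 * V 1 + 24300 * V 1 * V 4 + 72900 * V 2 * V 3)) := by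
  rw [pU3, bridge3, stepU3_0, stepU3_1, stepU3_2]
lemma pU4 : pderiv ((0:Fin 2), 4) G54 = (900 * U 0 * U 1 + 2700 * V 0 * V 1) := by
  simp [G54, pderiv_mul, pdU, pdUV, pd_ofNat, -Prod.mk_zero_zero, -Prod.mk_one_one] <;> ring
lemma stepU4_0 : Dx (900 * U 0 * U 1 + 2700 * V 0 * V 1) = (900 * U 0 * U 2 + 900 * U 1 * U 1 + 2700 * V 0 * V 2 + 2700 * V 1 * V 1) := by
  simp only [map_add, map_neg, neg_zero, Derivation.leibniz, Dx_U, Dx_V, Dx_ofNat, Derivation.map_one_eq_zero, smul_eq_mul, mul_zero, zero_mul, add_zero, zero_add, mul_one, one_mul] <;> ring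
lemma stepU4_1 : Dx (900 * U 0 * U 2 + 900 * U 1 * U 1 + 2700 * V 0 * V 2 + 2700 * V 1 * V 1) = (900 * U 0 * U 3 + 2700 * U 1 * U 2 + 2700 * V 0 * V 3 + 8100 * V 1 * V 2) := by
  simp only [map_add, map_neg, neg_zero, Derivation.leibniz, Dx_U, Dx_V, Dx_ofNat, Derivation.map_one_eq_zero, smul_eq_mul, mul_zero, zero_mul, add_zero, zero_add, mul_one, one_mul] <;> ring
lemma stepU4_2 : Dx (900 * U 0 * U 3 + 2700 * U 1 * U 2 + 2700 * V 0 * V 3 + 8100 * V 1 * V 2) = (900 * U 0 * U 4 + 3600 * U 1 * U 3 + 2700 * U 2 * U 2 + 2700 * V 0 * V 4 + 10800 * V 1 * V 3 + 8100 * V 2 * V 2) := by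
  simp only [map_add, map_neg, neg_zero, Derivation.leibniz, Dx_U, Dx_V, Dx_ofNat, Derivation.map_one_eq_zero, smul_eq_mul, mul_zero, zero_mul, add_zero, zero_add, mul_one, one_mul] <;> ring
lemma stepU4_3 : Dx (900 * U 0 * U 4 + 3600 * U 1 * U 3 + 2700 * U 2 * U 2 + 2700 * V 0 * V 4 + 10800 * V 1 * V 3 + 8100 * V 2 * V 2) = (900 * U 0 * U 5 + 4500 * U 1 * U 4 + 9000 * U 2 * U 3 + 2700 * V 0 * V 5 + 13500 * V 1 * V 4 + 27000 * V 2 * V 3) := by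
  simp only [map_add, map_neg, neg_zero, Derivation.leibniz, Dx_U, Dx_V, Dx_ofNat, Derivation.map_one_eq_zero, smul_eq_mul, mul_zero, zero_mul, add_zero, zero_add, mul_one, one_mul] <;> ring
lemma TU4 : ((-DxL)^4) (pderiv ((0:Fin 2), 4) G54) = (900 * U 0 * U 5 + 4500 * U 1 * U 4 + 9000 * U 2 * U 3 + 2700 * V 0 * V 5 + 13500 * V 1 * V 4 + 27000 * V 2 * V 3) := by
  rw [pU4, bridge4, stepU4_0, stepU4_1, stepU4_2, stepU4_3]
lemma pU5 : pderiv ((0:Fin 2), 5) G54 = ((-360) * U 0 * U 0 + 180 * V 0 * V 0) := by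
  simp [G54, pderiv_mul, pdU, pdUV, pd_ofNat, -Prod.mk_zero_zero, -Prod.mk_one_one] <;> ring
lemma stepU5_0 : Dx ((-360) * U 0 * U 0 + 180 * V 0 * V 0) = ((-720) * U 0 * U 1 + 360 * V 0 * V 1) := by
  simp only [map_add, map_neg, neg_zero, Derivation.leibniz, Dx_U, Dx_V, Dx_ofNat, Derivation.map_one_eq_zero, smul_eq_mul, mul_zero, zero_mul, add_zero, zero_add, mul_one, one_mul] <;> ring
lemma stepU5_1 : Dx ((-720) * U 0 * U 1 + 360 * V 0 * V 1) = ((-720) * U 0 * U 2 + (-720) * U 1 * U 1 + 360 * V 0 * V 2 + 360 * V 1 * V 1) := by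
  simp only [map_add, map_neg, neg_zero, Derivation.leibniz, Dx_U, Dx_V, Dx_ofNat, Derivation.map_one_eq_zero, smul_eq_mul, mul_zero, zero_mul, add_zero, zero_add, mul_one, one_mul] <;> ring
lemma stepU5_2 : Dx ((-720) * U 0 * U 2 + (-720) * U 1 * U 1 + 360 * V 0 * V 2 + 360 * V 1 * V 1) = ((-720) * U 0 * U 3 + (-2160) * U 1 * U 2 + 360 * V 0 * V 3 + 1080 * V 1 * V 2) := by
  simp only [map_add, map_neg, neg_zero, Derivation.leibniz, Dx_U, Dx_V, Dx_ofNat, Derivation.map_one_eq_zero, smul_eq_mul, mul_zero, zero_mul, add_zero, zero_add, mul_one, one_mul] <;> ring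
lemma stepU5_3 : Dx ((-720) * U 0 * U 3 + (-2160) * U 1 * U 2 + 360 * V 0 * V 3 + 1080 * V 1 * V 2) = ((-720) * U 0 * U 4 + (-2880) * U 1 * U 3 + (-2160) * U 2 * U 2 + 360 * V 0 * V 4 + 1440 * V 1 * V 3 + 1080 * V 2 * V 2) := by
  simp only [map_add, map_neg, neg_zero, Derivation.leibniz, Dx_U, Dx_V, Dx_ofNat, Derivation.map_one_eq_zero, smul_eq_mul, mul_zero, zero_mul, add_zero, zero_add, mul_one, one_mul] <;> ring
lemma stepU5_4 : Dx ((-720) * U 0 * U 4 + (-2880) * U 1 * U 3 + (-2160) * U 2 * U 2 + 360 * V 0 * V 4 + 1440 * V 1 * V 3 + 1080 * V 2 * V 2) = ((-720) * U 0 * U 5 + (-3600) * U 1 * U 4 + (-7200) * U 2 * U 3 + 360 * V 0 * V 5 + 1800 * V 1 * V 4 + 3600 * V 2 * V 3) := by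
  simp only [map_add, map_neg, neg_zero, Derivation.leibniz, Dx_U, Dx_V, Dx_ofNat, Derivation.map_one_eq_zero, smul_eq_mul, mul_zero, zero_mul, add_zero, zero_add, mul_one, one_mul] <;> ring
lemma TU5 : ((-DxL)^5) (pderiv ((0:Fin 2), 5) G54) = (-((-720) * U 0 * U 5 + (-3600) * U 1 * U 4 + (-7200) * U 2 * U 3 + 360 * V 0 * V 5 + 1800 * V 1 * V 4 + 3600 * V 2 * V 3)) := by
  rw [pU5, bridge5, stepU5_0, stepU5_1, stepU5_2, stepU5_3, stepU5_4]
lemma pU6 : pderiv ((0:Fin 2), 6) G54 = ((-150) * U 1) := by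
  simp [G54, pderiv_mul, pdU, pdUV, pd_ofNat, -Prod.mk_zero_zero, -Prod.mk_one_one] <;> ring
lemma stepU6_0 : Dx ((-150) * U 1) = ((-150) * U 2) := by
  simp only [map_add, map_neg, neg_zero, Derivation.leibniz, Dx_U, Dx_V, Dx_ofNat, Derivation.map_one_eq_zero, smul_eq_mul, mul_zero, zero_mul, add_zero, zero_add, mul_one, one_mul] <;> ring
lemma stepU6_1 : Dx ((-150) * U 2) = ((-150) * U 3) := by
  simp only [map_add, map_neg, neg_zero, Derivation.leibniz, Dx_U, Dx_V, Dx_ofNat, Derivation.map_one_eq_zero, smul_eq_mul, mul_zero, zero_mul, add_zero, zero_add, mul_one, one_mul] <;> ring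
lemma stepU6_2 : Dx ((-150) * U 3) = ((-150) * U 4) := by
  simp only [map_add, map_neg, neg_zero, Derivation.leibniz, Dx_U, Dx_V, Dx_ofNat, Derivation.map_one_eq_zero, smul_eq_mul, mul_zero, zero_mul, add_zero, zero_add, mul_one, one_mul] <;> ring
lemma stepU6_3 : Dx ((-150) * U 4) = ((-150) * U 5) := by
  simp only [map_add, map_neg, neg_zero, Derivation.leibniz, Dx_U, Dx_V, Dx_ofNat, Derivation.map_one_eq_zero, smul_eq_mul, mul_zero, zero_mul, add_zero, zero_add, mul_one, one_mul] <;> ring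
lemma stepU6_4 : Dx ((-150) * U 5) = ((-150) * U 6) := by
  simp only [map_add, map_neg, neg_zero, Derivation.leibniz, Dx_U, Dx_V, Dx_ofNat, Derivation.map_one_eq_zero, smul_eq_mul, mul_zero, zero_mul, add_zero, zero_add, mul_one, one_mul] <;> ring
lemma stepU6_5 : Dx ((-150) * U 6) = ((-150) * U 7) := by
  simp only [map_add, map_neg, neg_zero, Derivation.leibniz, Dx_U, Dx_V, Dx_ofNat, Derivation.map_one_eq_zero, smul_eq_mul, mul_zero, zero_mul, add_zero, zero_add, mul_one, one_mul] <;> ring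
lemma TU6 : ((-DxL)^6) (pderiv ((0:Fin 2), 6) G54) = ((-150) * U 7) := by
  rw [pU6, bridge6, stepU6_0, stepU6_1, stepU6_2, stepU6_3, stepU6_4, stepU6_5]
lemma SU : ∑ k ∈ Finset.range 7, ((-DxL)^k) (pderiv ((0:Fin 2), k) G54) = 0 := by
  rw [Finset.sum_range_succ, Finset.sum_range_succ, Finset.sum_range_succ, Finset.sum_range_succ,
    Finset.sum_range_succ, Finset.sum_range_succ, Finset.sum_range_one]
  rw [TU0, TU1, TU2, TU3, TU4, TU5, TU6]
  ring
lemma pV0 : pderiv ((1:Fin 2), 0) G54 = (4320 * U 0 * U 0 * V 3 + 10800 * U 0 * U 1 * V 2 + 4320 * U 0 * U 2 * V 1 + 2160 * U 0 * U 3 * V 0 + (-6480) * U 0 * V 0 * V 3 + (-6480) * U 0 * V 1 * V 2 + (-3240) * U 0 * V 5 + (-1080) * U 1 * U 1 * V 1 + (-4320) * U 1 * U 2 * V 0 + (-10800) * U 1 * V 0 * V 2 + (-4320) * U 1 * V 1 * V 1 + (-900) * U 1 * V 4 + (-10800) * U 2 * V 0 * V 1 + (-3240) * U 3 * V 0 *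 V 0 + 2700 * U 4 * V 1 + 360 * U 5 * V 0 + 3240 * V 0 * V 0 * V 3 + 12960 * V 0 * V 1 * V 2 + 3240 * V 0 * V 5 + 3240 * V 1 * V 1 * V 1) := by
  simp [G54, pderiv_mul, pdV, pdVU, pd_ofNat, -Prod.mk_zero_zero, -Prod.mk_one_one] <;> ring
lemma TV0 : ((-DxL)^0) (pderiv ((1:Fin 2), 0) G54) = (4320 * U 0 * U 0 * V 3 + 10800 * U 0 * U 1 * V 2 + 4320 * U 0 * U 2 * V 1 + 2160 * U 0 * U 3 * V 0 + (-6480) * U 0 * V 0 * V 3 + (-6480) * U 0 * V 1 * V 2 + (-3240) * U 0 * V 5 + (-1080) * U 1 * U 1 * V 1 + (-4320) * U 1 * U 2 * V 0 + (-10800) * U 1 * V 0 * V 2 + (-4320) * U 1 * V 1 * V 1 + (-900) * U 1 * V 4 + (-10800) * U 2 * V 0 * V 1 + (-3240) * U 3 * V 0 * V 0 + 2700 * U 4 * V 1 + 360 * U 5 * V 0 + 3240 * V 0 * V 0 * V 3 + 12960 * V 0 * V 1 * V 2 + 3240 * V 0 * V 5 + 3240 * V 1 * V 1 * V 1) :=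 by
  rw [pV0, bridge0]
lemma pV1 : pderiv ((1:Fin 2), 1) G54 = ((-6480) * U 0 * U 0 * V 2 + (-17280) * U 0 * U 1 * V 1 + 4320 * U 0 * U 2 * V 0 + (-6480) * U 0 * V 0 * V 2 + 8100 * U 0 * V 4 + (-1080) * U 1 * U 1 * V 0 + (-8640) * U 1 * V 0 * V 1 + 18000 * U 1 * V 3 + (-5400) * U 2 * V 0 * V 0 + 21600 * U 2 * V 2 + 24300 * U 3 * V 1 + 2700 * U 4 * V 0 + 6480 * V 0 * V 0 * V 2 + 9720 * V 0 * V 1 * V 1 + (-16200) * V 1 * V 3 + (-8100) * V 2 * V 2 + (-4050) * V 6) := by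
  simp [G54, pderiv_mul, pdV, pdVU, pd_ofNat, -Prod.mk_zero_zero, -Prod.mk_one_one] <;> ring
lemma stepV1_0 : Dx ((-6480) * U 0 * U 0 * V 2 + (-17280) * U 0 * U 1 * V 1 + 4320 * U 0 * U 2 * V 0 + (-6480) * U 0 * V 0 * V 2 + 8100 * U 0 * V 4 + (-1080) * U 1 * U 1 * V 0 + (-8640) * U 1 * V 0 * V 1 + 18000 * U 1 * V 3 + (-5400) * U 2 * V 0 * V 0 + 21600 * U 2 * V 2 + 24300 * U 3 * V 1 + 2700 * U 4 * V 0 + 6480 * V 0 * V 0 * V 2 + 9720 * V 0 * V 1 * V 1 + (-16200) * V 1 * V 3 + (-8100) * V 2 * V 2 + (-4050) * V 6) = ((-6480) * U 0 * U 0 * V 3 + (-30240) * U 0 * U 1 * V 2 + (-12960) * U 0 * U 2 * V 1 + 4320 * U 0 * U 3 * V 0 + (-6480) * U 0 * V 0 * V 3 + (-6480) * U 0 * V 1 * V 2 + 8100 * U 0 * V 5 + (-18360) * U 1 * U 1 * V 1 + 2160 * U 1 * U 2 * V 0 + (-15120) * U 1 * V 0 * V 2 + (-8640) * U 1 * V 1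 * V 1 + 26100 * U 1 * V 4 + (-19440) * U 2 * V 0 * V 1 + 39600 * U 2 * V 3 + (-5400) * U 3 * V 0 * V 0 + 45900 * U 3 * V 2 + 27000 * U 4 * V 1 + 2700 * U 5 * V 0 + 6480 * V 0 * V 0 * V 3 + 32400 * V 0 * V 1 * V 2 + 9720 * V 1 * V 1 * V 1 + (-16200) * V 1 * V 4 + (-32400) * V 2 * V 3 + (-4050) * V 7) := by
  simp only [map_add, map_neg, neg_zero, Derivation.leibniz, Dx_U, Dx_V, Dx_ofNat, Derivation.map_one_eq_zero, smul_eq_mul, mul_zero, zero_mul, add_zero, zero_add, mul_one, one_mul] <;> ring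
lemma TV1 : ((-DxL)^1) (pderiv ((1:Fin 2), 1) G54) = (-((-6480) * U 0 * U 0 * V 3 + (-30240) * U 0 * U 1 * V 2 + (-12960) * U 0 * U 2 * V 1 + 4320 * U 0 * U 3 * V 0 + (-6480) * U 0 * V 0 * V 3 + (-6480) * U 0 * V 1 * V 2 + 8100 * U 0 * V 5 + (-18360) * U 1 * U 1 * V 1 + 2160 * U 1 * U 2 * V 0 + (-15120) * U 1 * V 0 * V 2 + (-8640) * U 1 * V 1 * V 1 + 26100 * U 1 * V 4 + (-19440) * U 2 * V 0 * V 1 + 39600 * U 2 * V 3 + (-5400) * U 3 * V 0 * V 0 + 45900 * U 3 * V 2 + 27000 * U 4 * V 1 + 2700 * U 5 * V 0 + 6480 * V 0 * V 0 * V 3 + 32400 * V 0 * V 1 * V 2 + 9720 * V 1 * V 1 * V 1 + (-16200) * V 1 * V 4 + (-32400) * V 2 * V 3 + (-4050) * V 7)) := by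
  rw [pV1, bridge1, stepV1_0]
lemma pV2 : pderiv ((1:Fin 2), 2) G54 = ((-6480) * U 0 * U 0 * V 1 + 10800 * U 0 * U 1 * V 0 + (-6480) * U 0 * V 0 * V 1 + (-5400) * U 1 * V 0 * V 0 + (-2700) * U 1 * V 2 + 21600 * U 2 * V 1 + 6480 * V 0 * V 0 * V 1 + (-16200) * V 1 * V 2) := by
  simp [G54, pderiv_mul, pdV, pdVU, pd_ofNat, -Prod.mk_zero_zero, -Prod.mk_one_one] <;> ring
lemma stepV2_0 : Dx ((-6480) * U 0 * U 0 * V 1 + 10800 * U 0 * U 1 * V 0 + (-6480) * U 0 * V 0 * V 1 + (-5400) * U 1 * V 0 * V 0 + (-2700) * U 1 * V 2 + 21600 * U 2 * V 1 + 6480 * V 0 * V 0 * V 1 + (-16200) * V 1 * V 2) = ((-6480) * U 0 * U 0 * V 2 + (-2160) * U 0 * U 1 * V 1 + 10800 * U 0 * U 2 * V 0 + (-6480) * U 0 * V 0 * V 2 + (-6480) * U 0 * V 1 * V 1 + 10800 * U 1 * U 1 * V 0 + (-17280) * U 1 * V 0 * V 1 + (-2700) * U 1 * V 3 + (-5400)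 * U 2 * V 0 * V 0 + 18900 * U 2 * V 2 + 21600 * U 3 * V 1 + 6480 * V 0 * V 0 * V 2 + 12960 * V 0 * V 1 * V 1 + (-16200) * V 1 * V 3 + (-16200) * V 2 * V 2) := by
  simp only [map_add, map_neg, neg_zero, Derivation.leibniz, Dx_U, Dx_V, Dx_ofNat, Derivation.map_one_eq_zero, smul_eq_mul, mul_zero, zero_mul, add_zero, zero_add, mul_one, one_mul] <;> ring
lemma stepV2_1 : Dx ((-6480) * U 0 * U 0 * V 2 + (-2160) * U 0 * U 1 * V 1 + 10800 * U 0 * U 2 * V 0 + (-6480) * U 0 * V 0 * V 2 + (-6480) * U 0 * V 1 * V 1 + 10800 * U 1 * U 1 * V 0 + (-17280) * U 1 * V 0 * V 1 + (-2700) * U 1 * V 3 + (-5400) * U 2 * V 0 * V 0 + 18900 * U 2 * V 2 + 21600 * U 3 * V 1 + 6480 * V 0 * V 0 * V 2 + 12960 * V 0 * V 1 * V 1 + (-16200) * V 1 * V 3 + (-16200) * V 2 * V 2) = ((-6480) * U 0 * U 0 * V 3 + (-15120) * U 0 * U 1 * V 2 + 8640 * U 0 * U 2 * V 1 + 10800 *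 U 0 * U 3 * V 0 + (-6480) * U 0 * V 0 * V 3 + (-19440) * U 0 * V 1 * V 2 + 8640 * U 1 * U 1 * V 1 + 32400 * U 1 * U 2 * V 0 + (-23760) * U 1 * V 0 * V 2 + (-23760) * U 1 * V 1 * V 1 + (-2700) * U 1 * V 4 + (-28080) * U 2 * V 0 * V 1 + 16200 * U 2 * V 3 + (-5400) * U 3 * V 0 * V 0 + 40500 * U 3 * V 2 + 21600 * U 4 * V 1 + 6480 * V 0 * V 0 * V 3 + 38880 * V 0 * V 1 * V 2 + 12960 * V 1 * V 1 * V 1 + (-16200) * V 1 * V 4 + (-48600) * V 2 * V 3) := by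
  simp only [map_add, map_neg, neg_zero, Derivation.leibniz, Dx_U, Dx_V, Dx_ofNat, Derivation.map_one_eq_zero, smul_eq_mul, mul_zero, zero_mul, add_zero, zero_add, mul_one, one_mul] <;> ring
lemma TV2 : ((-DxL)^2) (pderiv ((1:Fin 2), 2) G54) = ((-6480) * U 0 * U 0 * V 3 + (-15120) * U 0 * U 1 * V 2 + 8640 * U 0 * U 2 * V 1 + 10800 * U 0 * U 3 * V 0 + (-6480) * U 0 * V 0 * V 3 + (-19440) * U 0 * V 1 * V 2 + 8640 * U 1 * U 1 * V 1 + 32400 * U 1 * U 2 * V 0 + (-23760) * U 1 * V 0 * V 2 + (-23760) * U 1 * V 1 * V 1 + (-2700) * U 1 * V 4 + (-28080) * U 2 * V 0 * V 1 + 16200 * U 2 * V 3 + (-5400) * U 3 * V 0 * V 0 + 40500 * U 3 * V 2 + 21600 * U 4 * V 1 + 6480 * V 0 * V 0 * V 3 + 38880 * V 0 * V 1 * V 2 + 12960 * V 1 * V 1 * V 1 + (-16200) * V 1 * V 4 + (-48600) * V 2 * V 3) := by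
  rw [pV2, bridge2, stepV2_0, stepV2_1]
lemma pV3 : pderiv ((1:Fin 2), 3) G54 = (4320 * U 0 * U 0 * V 0 + (-3240) * U 0 * V 0 * V 0 + 18000 * U 1 * V 1 + 1080 * V 0 * V 0 * V 0 + (-8100) * V 1 * V 1) := by
  simp [G54, pderiv_mul, pdV, pdVU, pd_ofNat, -Prod.mk_zero_zero, -Prod.mk_one_one] <;> ring
lemma stepV3_0 : Dx (4320 * U 0 * U 0 * V 0 + (-3240) * U 0 * V 0 * V 0 + 18000 * U 1 * V 1 + 1080 * V 0 * V 0 * V 0 + (-8100) * V 1 * V 1) = (4320 * U 0 * U 0 * V 1 + 8640 * U 0 * U 1 * V 0 + (-6480) * U 0 * V 0 * V 1 + (-3240) * U 1 * V 0 * V 0 + 18000 * U 1 * V 2 + 18000 * U 2 * V 1 + 3240 * V 0 * V 0 * V 1 + (-16200) * V 1 * V 2) := by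
  simp only [map_add, map_neg, neg_zero, Derivation.leibniz, Dx_U, Dx_V, Dx_ofNat, Derivation.map_one_eq_zero, smul_eq_mul, mul_zero, zero_mul, add_zero, zero_add, mul_one, one_mul] <;> ring
lemma stepV3_1 : Dx (4320 * U 0 * U 0 * V 1 + 8640 * U 0 * U 1 * V 0 + (-6480) * U 0 * V 0 * V 1 + (-3240) * U 1 * V 0 * V 0 + 18000 * U 1 * V 2 + 18000 * U 2 * V 1 + 3240 * V 0 * V 0 * V 1 + (-16200) * V 1 * V 2) = (4320 * U 0 * U 0 * V 2 + 17280 * U 0 * U 1 * V 1 + 8640 * U 0 * U 2 * V 0 + (-6480) * U 0 * V 0 * V 2 + (-6480) * U 0 * V 1 * V 1 + 8640 * U 1 * U 1 * V 0 + (-12960) * U 1 * V 0 * V 1 + 18000 * U 1 * V 3 + (-3240) * U 2 * V 0 * V 0 + 36000 * U 2 * V 2 + 18000 * U 3 * V 1 + 3240 * V 0 * V 0 * V 2 + 6480 * V 0 * V 1 * V 1 + (-16200) * V 1 * V 3 + (-16200) * V 2 * V 2) := by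
  simp only [map_add, map_neg, neg_zero, Derivation.leibniz, Dx_U, Dx_V, Dx_ofNat, Derivation.map_one_eq_zero, smul_eq_mul, mul_zero, zero_mul, add_zero, zero_add, mul_one, one_mul] <;> ring
lemma stepV3_2 : Dx (4320 * U 0 * U 0 * V 2 + 17280 * U 0 * U 1 * V 1 + 8640 * U 0 * U 2 * V 0 + (-6480) * U 0 * V 0 * V 2 + (-6480) * U 0 * V 1 * V 1 + 8640 * U 1 * U 1 * V 0 + (-12960) * U 1 * V 0 * V 1 + 18000 * U 1 * V 3 + (-3240) * U 2 * V 0 * V 0 + 36000 * U 2 * V 2 + 18000 * U 3 * V 1 + 3240 * V 0 * V 0 * V 2 + 6480 * V 0 * V 1 * V 1 + (-16200) * V 1 * V 3 + (-16200) * V 2 * V 2) = (4320 * U 0 * U 0 * V 3 + 25920 * U 0 * U 1 * V 2 + 25920 * U 0 * U 2 * V 1 + 8640 * U 0 * U 3 * V 0 + (-6480) * U 0 * V 0 * V 3 + (-19440) * U 0 * V 1 * V 2 + 25920 * U 1 * U 1 * V 1 + 25920 * U 1 * U 2 * V 0 + (-19440) * U 1 * V 0 * V 2 + (-19440) * U 1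 * V 1 * V 1 + 18000 * U 1 * V 4 + (-19440) * U 2 * V 0 * V 1 + 54000 * U 2 * V 3 + (-3240) * U 3 * V 0 * V 0 + 54000 * U 3 * V 2 + 18000 * U 4 * V 1 + 3240 * V 0 * V 0 * V 3 + 19440 * V 0 * V 1 * V 2 + 6480 * V 1 * V 1 * V 1 + (-16200) * V 1 * V 4 + (-48600) * V 2 * V 3) := by
  simp only [map_add, map_neg, neg_zero, Derivation.leibniz, Dx_U, Dx_V, Dx_ofNat, Derivation.map_one_eq_zero, smul_eq_mul, mul_zero, zero_mul, add_zero, zero_add, mul_one, one_mul] <;> ring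
lemma TV3 : ((-DxL)^3) (pderiv ((1:Fin 2), 3) G54) = (-(4320 * U 0 * U 0 * V 3 + 25920 * U 0 * U 1 * V 2 + 25920 * U 0 * U 2 * V 1 + 8640 * U 0 * U 3 * V 0 + (-6480) * U 0 * V 0 * V 3 + (-19440) * U 0 * V 1 * V 2 + 25920 * U 1 * U 1 * V 1 + 25920 * U 1 * U 2 * V 0 + (-19440) * U 1 * V 0 * V 2 + (-19440) * U 1 * V 1 * V 1 + 18000 * U 1 * V 4 + (-19440) * U 2 * V 0 * V 1 + 54000 * U 2 * V 3 + (-3240) * U 3 * V 0 * V 0 + 54000 * U 3 * V 2 + 18000 * U 4 * V 1 + 3240 * V 0 * V 0 * V 3 + 19440 * V 0 * V 1 * V 2 + 6480 * V 1 * V 1 * V 1 + (-16200) * V 1 * V 4 + (-48600) * V 2 * V 3)) := by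
  rw [pV3, bridge3, stepV3_0, stepV3_1, stepV3_2]
lemma pV4 : pderiv ((1:Fin 2), 4) G54 = (8100 * U 0 * V 1 + (-900) * U 1 * V 0) := by
  simp [G54, pderiv_mul, pdV, pdVU, pd_ofNat, -Prod.mk_zero_zero, -Prod.mk_one_one] <;> ring
lemma stepV4_0 : Dx (8100 * U 0 * V 1 + (-900) * U 1 * V 0) = (8100 * U 0 * V 2 + 7200 * U 1 * V 1 + (-900) * U 2 * V 0) := by
  simp only [map_add, map_neg, neg_zero, Derivation.leibniz, Dx_U, Dx_V, Dx_ofNat, Derivation.map_one_eq_zero, smul_eq_mul, mul_zero, zero_mul, add_zero, zero_add, mul_one, one_mul] <;> ring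
lemma stepV4_1 : Dx (8100 * U 0 * V 2 + 7200 * U 1 * V 1 + (-900) * U 2 * V 0) = (8100 * U 0 * V 3 + 15300 * U 1 * V 2 + 6300 * U 2 * V 1 + (-900) * U 3 * V 0) := by
  simp only [map_add, map_neg, neg_zero, Derivation.leibniz, Dx_U, Dx_V, Dx_ofNat, Derivation.map_one_eq_zero, smul_eq_mul, mul_zero, zero_mul, add_zero, zero_add, mul_one, one_mul] <;> ring
lemma stepV4_2 : Dx (8100 * U 0 * V 3 + 15300 * U 1 * V 2 + 6300 * U 2 * V 1 + (-900) * U 3 * V 0) = (8100 * U 0 * V 4 + 23400 * U 1 * V 3 + 21600 * U 2 * V 2 + 5400 * U 3 * V 1 + (-900) * U 4 * V 0) := by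
  simp only [map_add, map_neg, neg_zero, Derivation.leibniz, Dx_U, Dx_V, Dx_ofNat, Derivation.map_one_eq_zero, smul_eq_mul, mul_zero, zero_mul, add_zero, zero_add, mul_one, one_mul] <;> ring
lemma stepV4_3 : Dx (8100 * U 0 * V 4 + 23400 * U 1 * V 3 + 21600 * U 2 * V 2 + 5400 * U 3 * V 1 + (-900) * U 4 * V 0) = (8100 * U 0 * V 5 + 31500 * U 1 * V 4 + 45000 * U 2 * V 3 + 27000 * U 3 * V 2 + 4500 * U 4 * V 1 + (-900) * U 5 * V 0) := by
  simp only [map_add, map_neg, neg_zero, Derivation.leibniz, Dx_U, Dx_V, Dx_ofNat, Derivation.map_one_eq_zero, smul_eq_mul, mul_zero, zero_mul, add_zero, zero_add, mul_one, one_mul] <;> ring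
lemma TV4 : ((-DxL)^4) (pderiv ((1:Fin 2), 4) G54) = (8100 * U 0 * V 5 + 31500 * U 1 * V 4 + 45000 * U 2 * V 3 + 27000 * U 3 * V 2 + 4500 * U 4 * V 1 + (-900) * U 5 * V 0) := by
  rw [pV4, bridge4, stepV4_0, stepV4_1, stepV4_2, stepV4_3]
lemma pV5 : pderiv ((1:Fin 2), 5) G54 = ((-3240) * U 0 * V 0 + 1620 * V 0 * V 0) := by
  simp [G54, pderiv_mul, pdV, pdVU, pd_ofNat, -Prod.mk_zero_zero, -Prod.mk_one_one] <;> ring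
lemma stepV5_0 : Dx ((-3240) * U 0 * V 0 + 1620 * V 0 * V 0) = ((-3240) * U 0 * V 1 + (-3240) * U 1 * V 0 + 3240 * V 0 * V 1) := by
  simp only [map_add, map_neg, neg_zero, Derivation.leibniz, Dx_U, Dx_V, Dx_ofNat, Derivation.map_one_eq_zero, smul_eq_mul, mul_zero, zero_mul, add_zero, zero_add, mul_one, one_mul] <;> ring
lemma stepV5_1 : Dx ((-3240) * U 0 * V 1 + (-3240) * U 1 * V 0 + 3240 * V 0 * V 1) = ((-3240) * U 0 * V 2 + (-6480) * U 1 * V 1 + (-3240) * U 2 * V 0 + 3240 * V 0 * V 2 + 3240 * V 1 * V 1) := by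
  simp only [map_add, map_neg, neg_zero, Derivation.leibniz, Dx_U, Dx_V, Dx_ofNat, Derivation.map_one_eq_zero, smul_eq_mul, mul_zero, zero_mul, add_zero, zero_add, mul_one, one_mul] <;> ring
lemma stepV5_2 : Dx ((-3240) * U 0 * V 2 + (-6480) * U 1 * V 1 + (-3240) * U 2 * V 0 + 3240 * V 0 * V 2 + 3240 * V 1 * V 1) = ((-3240) * U 0 * V 3 + (-9720) * U 1 * V 2 + (-9720) * U 2 * V 1 + (-3240) * U 3 * V 0 + 3240 * V 0 * V 3 + 9720 * V 1 * V 2) := by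
  simp only [map_add, map_neg, neg_zero, Derivation.leibniz, Dx_U, Dx_V, Dx_ofNat, Derivation.map_one_eq_zero, smul_eq_mul, mul_zero, zero_mul, add_zero, zero_add, mul_one, one_mul] <;> ring
lemma stepV5_3 : Dx ((-3240) * U 0 * V 3 + (-9720) * U 1 * V 2 + (-9720) * U 2 * V 1 + (-3240) * U 3 * V 0 + 3240 * V 0 * V 3 + 9720 * V 1 * V 2) = ((-3240) * U 0 * V 4 + (-12960) * U 1 * V 3 + (-19440) * U 2 * V 2 + (-12960) * U 3 * V 1 + (-3240) * U 4 * V 0 + 3240 * V 0 * V 4 + 12960 * V 1 * V 3 + 9720 * V 2 * V 2) := by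
  simp only [map_add, map_neg, neg_zero, Derivation.leibniz, Dx_U, Dx_V, Dx_ofNat, Derivation.map_one_eq_zero, smul_eq_mul, mul_zero, zero_mul, add_zero, zero_add, mul_one, one_mul] <;> ring
lemma stepV5_4 : Dx ((-3240) * U 0 * V 4 + (-12960) * U 1 * V 3 + (-19440) * U 2 * V 2 + (-12960) * U 3 * V 1 + (-3240) * U 4 * V 0 + 3240 * V 0 * V 4 + 12960 * V 1 * V 3 + 9720 * V 2 * V 2) = ((-3240) * U 0 * V 5 + (-16200) * U 1 * V 4 + (-32400) * U 2 * V 3 + (-32400) * U 3 * V 2 + (-16200) * U 4 * V 1 + (-3240) * U 5 * V 0 + 3240 * V 0 * V 5 + 16200 * V 1 * V 4 + 32400 * V 2 * V 3) := by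
  simp only [map_add, map_neg, neg_zero, Derivation.leibniz, Dx_U, Dx_V, Dx_ofNat, Derivation.map_one_eq_zero, smul_eq_mul, mul_zero, zero_mul, add_zero, zero_add, mul_one, one_mul] <;> ring
lemma TV5 : ((-DxL)^5) (pderiv ((1:Fin 2), 5) G54) = (-((-3240) * U 0 * V 5 + (-16200) * U 1 * V 4 + (-32400) * U 2 * V 3 + (-32400) * U 3 * V 2 + (-16200) * U 4 * V 1 + (-3240) * U 5 * V 0 + 3240 * V 0 * V 5 + 16200 * V 1 * V 4 + 32400 * V 2 * V 3)) := by
  rw [pV5, bridge5, stepV5_0, stepV5_1, stepV5_2, stepV5_3, stepV5_4]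
lemma pV6 : pderiv ((1:Fin 2), 6) G54 = ((-4050) * V 1) := by
  simp [G54, pderiv_mul, pdV, pdVU, pd_ofNat, -Prod.mk_zero_zero, -Prod.mk_one_one] <;> ring
lemma stepV6_0 : Dx ((-4050) * V 1) = ((-4050) * V 2) := by
  simp only [map_add, map_neg, neg_zero, Derivation.leibniz, Dx_U, Dx_V, Dx_ofNat, Derivation.map_one_eq_zero, smul_eq_mul, mul_zero, zero_mul, add_zero, zero_add, mul_one, one_mul] <;> ring
lemma stepV6_1 : Dx ((-4050) * V 2) = ((-4050) * V 3) := by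
  simp only [map_add, map_neg, neg_zero, Derivation.leibniz, Dx_U, Dx_V, Dx_ofNat, Derivation.map_one_eq_zero, smul_eq_mul, mul_zero, zero_mul, add_zero, zero_add, mul_one, one_mul] <;> ring
lemma stepV6_2 : Dx ((-4050) * V 3) = ((-4050) * V 4) := by
  simp only [map_add, map_neg, neg_zero, Derivation.leibniz, Dx_U, Dx_V, Dx_ofNat, Derivation.map_one_eq_zero, smul_eq_mul, mul_zero, zero_mul, add_zero, zero_add, mul_one, one_mul] <;> ring
lemma stepV6_3 : Dx ((-4050) * V 4) = ((-4050) * V 5) := by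
  simp only [map_add, map_neg, neg_zero, Derivation.leibniz, Dx_U, Dx_V, Dx_ofNat, Derivation.map_one_eq_zero, smul_eq_mul, mul_zero, zero_mul, add_zero, zero_add, mul_one, one_mul] <;> ring
lemma stepV6_4 : Dx ((-4050) * V 5) = ((-4050) * V 6) := by
  simp only [map_add, map_neg, neg_zero, Derivation.leibniz, Dx_U, Dx_V, Dx_ofNat, Derivation.map_one_eq_zero, smul_eq_mul, mul_zero, zero_mul, add_zero, zero_add, mul_one, one_mul] <;> ring
lemma stepV6_5 : Dx ((-4050) * V 6) = ((-4050) * V 7) := by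
  simp only [map_add, map_neg, neg_zero, Derivation.leibniz, Dx_U, Dx_V, Dx_ofNat, Derivation.map_one_eq_zero, smul_eq_mul, mul_zero, zero_mul, add_zero, zero_add, mul_one, one_mul] <;> ring
lemma TV6 : ((-DxL)^6) (pderiv ((1:Fin 2), 6) G54) = ((-4050) * V 7) := by
  rw [pV6, bridge6, stepV6_0, stepV6_1, stepV6_2, stepV6_3, stepV6_4, stepV6_5]
lemma SV : ∑ k ∈ Finset.range 7, ((-DxL)^k) (pderiv ((1:Fin 2), k) G54) = 0 := by
  rw [Finset.sum_range_succ, Finset.sum_range_succ, Finset.sum_range_succ, Finset.sum_range_succ,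
    Finset.sum_range_succ, Finset.sum_range_succ, Finset.sum_range_one]
  rw [TV0, TV1, TV2, TV3, TV4, TV5, TV6]
  ring

/-- h₂ is a conserved density for the MNW system: the
variational derivatives of D_t(h₂) vanish. -/
theorem h2_conserved :
    varU (evDer F1 F2 ((5/6 : ℚ) • (U 1 ^ 2) - (5/2 : ℚ) • (V 1 ^ 2) + (4/3 : ℚ) • (U 0 ^ 3) + (2/3 : ℚ) • (V 0 ^ 3) - 2 * U 0 * V 0 ^ 2)) = 0 ∧
    varV (evDer F1 F2 ((5/6 : ℚ) • (U 1 ^ 2) - (5/2 : ℚ) • (V 1 ^ 2) + (4/3 : ℚ) • (U 0 ^ 3) + (2/3 : ℚ) • (V 0 ^ 3) - 2 * U 0 * V 0 ^ 2)) = 0 := by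
  constructor
  · rw [varU_eq _ 7 (by
      intro k hk
      rw [Dh2, Derivation.map_smul, pHighU k hk, smul_zero])]
    have key : ∀ k, ((-DxL)^k) (pderiv ((0:Fin 2), k) (evDer F1 F2 ((5/6 : ℚ) • (U 1 ^ 2) - (5/2 : ℚ) • (V 1 ^ 2) + (4/3 : ℚ) • (U 0 ^ 3) + (2/3 : ℚ) • (V 0 ^ 3) - 2 * U 0 * V 0 ^ 2)))
        = (1/54:ℚ) • (((-DxL)^k) (pderiv ((0:Fin 2), k) G54)) := by
      intro k; rw [Dh2, Derivation.map_smul, map_smul]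
    simp only [key, ← Finset.smul_sum, SU, smul_zero]
  · rw [varV_eq _ 7 (by
      intro k hk
      rw [Dh2, Derivation.map_smul, pHighV k hk, smul_zero])]
    have key : ∀ k, ((-DxL)^k) (pderiv ((1:Fin 2), k) (evDer F1 F2 ((5/6 : ℚ) • (U 1 ^ 2) - (5/2 : ℚ) • (V 1 ^ 2) + (4/3 : ℚ) • (U 0 ^ 3) + (2/3 : ℚ) • (V 0 ^ 3) - 2 * U 0 * V 0 ^ 2)))
        = (1/54:ℚ) • (((-DxL)^k) (pderiv ((1:Fin 2), k) G54)) := by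
      intro k; rw [Dh2, Derivation.map_smul, map_smul]
    simp only [key, ← Finset.smul_sum, SV, smul_zero]
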